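/- Let (P_t)_{t≥0} be a quantum Markov semigroup on A = End(H) reversible with respect to the faithful state σ, with generator L having spectral basis {(λ_j, f_j)}_{j≥0} for -L (orthonormal in L₂(σ), with 0 = λ₀ < λ₁ ≤ λ₂ ≤ ...). Then for any state ρ and t ≥ 0, d_tr(ρP_t, σ)² ≤ (1/4) Σ_{j≥1} e^{-2λ_j t} |ρ(f_j)|². -/

import Mathlib

noncomputable section

open ContinuousLinearMap

/-- The algebra `A = End(H)` for `H = ℂⁿ` a finite-dimensional Hilbert space. -/
abbrev QA (n : ℕ) := EuclideanSpace ℂ (Fin n) →L[ℂ] EuclideanSpace ℂ (Fin n)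

/-- The trace of an operator on the finite-dimensional Hilbert space. -/
noncomputable def trC {n : ℕ} (a : QA n) : ℂ :=
  LinearMap.trace ℂ (EuclideanSpace ℂ (Fin n)) (a : _ →ₗ[ℂ] _)

/-- The GNS inner product `⟨a,b⟩_σ = tr(a* σ b)`. -/
noncomputable def gns {n : ℕ} (σ a b : QA n) : ℂ :=
  trC ((ContinuousLinearMap.adjoint a ∘L σ) ∘L b)

set_option maxHeartbeats 1000000
set_option synthInstance.maxHeartbeats 1000000

namespace QMSAux

variable {n : ℕ}

def trClin (n : ℕ) : QA n →ₗ[ℂ] ℂ :=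
  (LinearMap.trace ℂ (EuclideanSpace ℂ (Fin n))).comp (ContinuousLinearMap.coeLM ℂ)

lemma trC_eq (a : QA n) : trC a = trClin n a := rfl

lemma trC_add (a b : QA n) : trC (a + b) = trC a + trC b := by
  simp [trC_eq, map_add]

lemma trC_smul (c : ℂ) (a : QA n) : trC (c • a) = c * trC a := by
  simp [trC_eq, map_smul, smul_eq_mul]

lemma trC_sum {ι : Type*} (s : Finset ι) (F : ι → QA n) :
    trC (∑ i ∈ s, F i) = ∑ i ∈ s, trC (F i) := by
  simp [trC_eq, map_sum]

lemma trC_comm (x y : QA n) : trC (x ∘L y) = trC (y ∘L x) := by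
  have h := LinearMap.trace_mul_comm ℂ (x : EuclideanSpace ℂ (Fin n) →ₗ[ℂ] _)
    (y : EuclideanSpace ℂ (Fin n) →ₗ[ℂ] _)
  simpa [trC, ContinuousLinearMap.coe_comp, Module.End.mul_eq_comp] using h

lemma trC_eq_sum_coord (a : QA n) :
    trC a = ∑ i, a (EuclideanSpace.single i 1) i := by
  rw [trC, LinearMap.trace_eq_matrix_trace ℂ (EuclideanSpace.basisFun (Fin n) ℂ).toBasis]
  simp only [Matrix.trace, Matrix.diag, LinearMap.toMatrix_apply]
  congr 1
  ext i
  simp [EuclideanSpace.basisFun_apply, OrthonormalBasis.coe_toBasis,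
    OrthonormalBasis.coe_toBasis_repr_apply, EuclideanSpace.basisFun_repr]

lemma coord_eq_inner (v : EuclideanSpace ℂ (Fin n)) (i : Fin n) :
    v i = inner ℂ (EuclideanSpace.single i (1:ℂ)) v := by
  rw [EuclideanSpace.inner_single_left]
  simp

lemma trC_adjoint_comp (x y : QA n) :
    trC (ContinuousLinearMap.adjoint x ∘L y)
      = ∑ i, (inner ℂ (x (EuclideanSpace.single i 1)) (y (EuclideanSpace.single i 1)) : ℂ) := by
  rw [trC_eq_sum_coord]
  congr 1
  ext i
  rw [ContinuousLinearMap.comp_apply,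
    coord_eq_inner ((ContinuousLinearMap.adjoint x) (y (EuclideanSpace.single i 1))) i,
    adjoint_inner_right]

lemma trC_adjoint_comp_self (x : QA n) :
    trC (ContinuousLinearMap.adjoint x ∘L x)
      = ((∑ i, ‖x (EuclideanSpace.single i 1)‖ ^ 2 : ℝ) : ℂ) := by
  rw [trC_adjoint_comp]
  push_cast
  congr 1
  ext i
  rw [inner_self_eq_norm_sq_to_K]
  norm_num

lemma norm_adjoint (a : QA n) : ‖ContinuousLinearMap.adjoint a‖ = ‖a‖ :=
  LinearIsometryEquiv.norm_map (ContinuousLinearMap.adjoint : QA n ≃ₗᵢ⋆[ℂ] QA n) a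

/-- key bound : `⟨a,a⟩_σ` is real and at most `‖a‖²`. -/
lemma gns_self_le (σ : QA n) (hσpos : σ.IsPositive) (hσtr : trC σ = 1) (a : QA n) :
    (gns σ a a).re ≤ ‖a‖ ^ 2 := by
  obtain ⟨s, hs, hss⟩ : ∃ s : QA n, IsSelfAdjoint s ∧ s ∘L s = σ := by
    have h0 : 0 ≤ σ := (nonneg_iff_isPositive σ).mpr hσpos
    exact ⟨CFC.sqrt σ, IsSelfAdjoint.of_nonneg (CFC.sqrt_nonneg (a := σ)),
      CFC.sqrt_mul_sqrt_self σ h0⟩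
  have hadj : ContinuousLinearMap.adjoint s = s := hs.adjoint_eq
  set w : QA n := s ∘L a with hw
  have h1 : gns σ a a = trC (ContinuousLinearMap.adjoint w ∘L w) := by
    rw [gns, hw, adjoint_comp, hadj, ← hss]
    congr 1
  have h2 : trC (ContinuousLinearMap.adjoint w ∘L w)
      = trC (ContinuousLinearMap.adjoint (ContinuousLinearMap.adjoint w)
          ∘L ContinuousLinearMap.adjoint w) := by
    rw [adjoint_adjoint, trC_comm]
  have h3 : trC (ContinuousLinearMap.adjoint s ∘L s) = trC σ := by rw [hadj, hss]
  have hsum : (∑ i, ‖s (EuclideanSpace.single i 1)‖ ^ 2 : ℝ) = 1 := by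
    have := trC_adjoint_comp_self s
    rw [h3, hσtr] at this
    exact_mod_cast this.symm
  have h4 : (gns σ a a).re = ∑ i, ‖ContinuousLinearMap.adjoint w (EuclideanSpace.single i 1)‖ ^ 2 := by
    rw [h1, h2, trC_adjoint_comp_self]
    exact Complex.ofReal_re _
  rw [h4]
  have hb : ∀ i : Fin n, ‖ContinuousLinearMap.adjoint w (EuclideanSpace.single i 1)‖ ^ 2
      ≤ ‖a‖ ^ 2 * ‖s (EuclideanSpace.single i 1)‖ ^ 2 := by
    intro i
    have hcal : ContinuousLinearMap.adjoint w (EuclideanSpace.single i 1)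
        = ContinuousLinearMap.adjoint a (s (EuclideanSpace.single i 1)) := by
      rw [hw, adjoint_comp, hadj]; rfl
    rw [hcal, ← mul_pow]
    have h5 : ‖ContinuousLinearMap.adjoint a (s (EuclideanSpace.single i 1))‖
        ≤ ‖a‖ * ‖s (EuclideanSpace.single i 1)‖ := by
      calc ‖ContinuousLinearMap.adjoint a (s (EuclideanSpace.single i 1))‖
          ≤ ‖ContinuousLinearMap.adjoint a‖ * ‖s (EuclideanSpace.single i 1)‖ :=
            le_opNorm _ _
        _ = ‖a‖ * ‖s (EuclideanSpace.single i 1)‖ := by rw [norm_adjoint]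
    exact pow_le_pow_left₀ (norm_nonneg _) h5 2
  calc (∑ i, ‖ContinuousLinearMap.adjoint w (EuclideanSpace.single i 1)‖ ^ 2)
      ≤ ∑ i, ‖a‖ ^ 2 * ‖s (EuclideanSpace.single i 1)‖ ^ 2 := Finset.sum_le_sum fun i _ => hb i
    _ = ‖a‖ ^ 2 * ∑ i, ‖s (EuclideanSpace.single i 1)‖ ^ 2 := by rw [Finset.mul_sum]
    _ = ‖a‖ ^ 2 := by rw [hsum, mul_one]


lemma gns_zero_left (σ a : QA n) : gns σ 0 a = 0 := by
  rw [gns, map_zero, ContinuousLinearMap.zero_comp, ContinuousLinearMap.zero_comp]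
  simp [trC_eq]

lemma gns_add_left (σ x y a : QA n) : gns σ (x + y) a = gns σ x a + gns σ y a := by
  rw [gns, gns, gns, map_add, ContinuousLinearMap.add_comp, ContinuousLinearMap.add_comp,
    trC_add]

lemma gns_smul_left (σ : QA n) (c : ℂ) (x a : QA n) :
    gns σ (c • x) a = (starRingEnd ℂ) c * gns σ x a := by
  rw [gns, gns, map_smulₛₗ (ContinuousLinearMap.adjoint : QA n ≃ₗᵢ⋆[ℂ] QA n) c x,
    ContinuousLinearMap.smul_comp, ContinuousLinearMap.smul_comp, trC_smul]

lemma gns_sum_left (σ a : QA n) {ι : Type*} (s : Finset ι) (c : ι → ℂ) (F : ι → QA n) :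
    gns σ (∑ j ∈ s, c j • F j) a = ∑ j ∈ s, (starRingEnd ℂ) (c j) * gns σ (F j) a := by
  induction s using Finset.cons_induction with
  | empty => simpa using gns_zero_left σ a
  | cons j s hj ih =>
      rw [Finset.sum_cons, Finset.sum_cons, gns_add_left, gns_smul_left, ih]

lemma trC_comp_sum_smul (ρ : QA n) {ι : Type*} (s : Finset ι) (c : ι → ℂ) (F : ι → QA n) :
    trC (ρ ∘L ∑ j ∈ s, c j • F j) = ∑ j ∈ s, c j * trC (ρ ∘L F j) := by
  have h : (ρ ∘L ∑ j ∈ s, c j • F j) = ∑ j ∈ s, c j • (ρ ∘L F j) := by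
    show ρ * (∑ j ∈ s, c j • F j) = _
    rw [Finset.mul_sum]
    exact Finset.sum_congr rfl fun j _ => mul_smul_comm _ _ _
  rw [h, trC_sum]
  exact Finset.sum_congr rfl fun j _ => trC_smul _ _

lemma gns_one_left (σ a : QA n) : gns σ 1 a = trC (σ ∘L a) := by
  rw [gns]
  congr 2
  have h1 : (ContinuousLinearMap.adjoint (1 : QA n)) = 1 :=
    (IsSelfAdjoint.one (QA n)).adjoint_eq
  rw [h1, ContinuousLinearMap.one_def, ContinuousLinearMap.id_comp]

lemma conj_mul_self (z : ℂ) : (starRingEnd ℂ) z * z = ((‖z‖ : ℝ) : ℂ) ^ 2 := by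
  rw [mul_comm, Complex.mul_conj]
  norm_cast
  rw [Complex.sq_norm]

end QMSAux

/-- Let `(P_t)` be a QMS on `A = End(H)` reversible w.r.t. the faithful state `σ`,
whose generator `L` has spectral basis `{(λ_j, f_j)}` for `-L`: the `f_j` are an
orthonormal basis of `L₂(σ)`, `f_{j₀} = 𝟏`, `λ_{j₀} = 0`, `λ_j > 0` for `j ≠ j₀`, and
`P_t a = Σ_j e^{-λ_j t} ⟨f_j, a⟩_σ f_j`.  Then for any state `ρ` and `t ≥ 0`,
`d_tr(ρP_t, σ)² ≤ (1/4) Σ_{j ≠ j₀} e^{-2λ_j t} |ρ(f_j)|²`. -/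
theorem qms_trace_distance_spectral_bound (n : ℕ)
    (σ ρ : QA n)
    (hσpos : σ.IsPositive) (hσtr : trC σ = 1)
    (σinv : QA n) (hσinv : σ ∘L σinv = 1) (hσinv' : σinv ∘L σ = 1)
    (hρpos : ρ.IsPositive) (hρtr : trC ρ = 1)
    (J : Type) [Fintype J] [DecidableEq J] (j0 : J)
    (f : J → QA n) (lam : J → ℝ)
    (horth : ∀ i j : J, gns σ (f i) (f j) = if i = j then 1 else 0)
    (hcomplete : ∀ a : QA n, a = ∑ j : J, gns σ (f j) a • f j)
    (hf0 : f j0 = 1) (hlam0 : lam j0 = 0)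
    (hlampos : ∀ j : J, j ≠ j0 → 0 < lam j)
    (P : ℝ → QA n → QA n)
    (hP : ∀ (t : ℝ) (a : QA n),
      P t a = ∑ j : J, ((Real.exp (-(lam j) * t) : ℂ) * gns σ (f j) a) • f j)
    (t : ℝ) (ht : 0 ≤ t) :
    ((1/2) * sSup {x : ℝ | ∃ a : QA n, ‖a‖ = 1 ∧
        x = ‖trC (ρ ∘L P t a) - trC (σ ∘L a)‖}) ^ 2
      ≤ (1/4) * ∑ j ∈ Finset.univ.erase j0,
          Real.exp (-2 * lam j * t) * (‖trC (ρ ∘L f j)‖) ^ 2 := by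
  classical
  set S : ℝ := ∑ j ∈ Finset.univ.erase j0,
      Real.exp (-2 * lam j * t) * (‖trC (ρ ∘L f j)‖) ^ 2 with hS
  have hS0 : 0 ≤ S := Finset.sum_nonneg fun j _ =>
    mul_nonneg (Real.exp_nonneg _) (sq_nonneg _)
  -- the key pointwise bound
  have key : ∀ a : QA n, ‖a‖ = 1 →
      ‖trC (ρ ∘L P t a) - trC (σ ∘L a)‖ ≤ Real.sqrt S := by
    intro a ha
    have h1 : trC (ρ ∘L P t a)
        = ∑ j : J, ((Real.exp (-(lam j) * t) : ℂ) * gns σ (f j) a) * trC (ρ ∘L f j) := by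
      rw [hP t a, QMSAux.trC_comp_sum_smul]
    have h2 : trC (σ ∘L a) = gns σ (f j0) a := by
      rw [hf0, QMSAux.gns_one_left]
    have h3 : trC (ρ ∘L f j0) = 1 := by
      rw [hf0]
      have : ρ ∘L (1 : QA n) = ρ := by
        rw [ContinuousLinearMap.one_def, ContinuousLinearMap.comp_id]
      rw [this, hρtr]
    have hsplit : trC (ρ ∘L P t a) - trC (σ ∘L a)
        = ∑ j ∈ Finset.univ.erase j0,
            ((Real.exp (-(lam j) * t) : ℂ) * gns σ (f j) a) * trC (ρ ∘L f j) := by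
      rw [h1, h2, ← Finset.add_sum_erase _ _ (Finset.mem_univ j0), h3, hlam0]
      simp
    -- triangle inequality
    have habs : ‖trC (ρ ∘L P t a) - trC (σ ∘L a)‖
        ≤ ∑ j ∈ Finset.univ.erase j0,
            (Real.exp (-(lam j) * t) * ‖trC (ρ ∘L f j)‖)
              * ‖gns σ (f j) a‖ := by
      rw [hsplit]
      refine (norm_sum_le _ _).trans (le_of_eq (Finset.sum_congr rfl fun j _ => ?_))
      rw [norm_mul, norm_mul, Complex.norm_real, Real.norm_eq_abs, abs_of_nonneg (Real.exp_nonneg _)]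
      ring
    -- Cauchy-Schwarz
    have hcs := Finset.sum_mul_sq_le_sq_mul_sq (Finset.univ.erase j0)
      (fun j => Real.exp (-(lam j) * t) * ‖trC (ρ ∘L f j)‖)
      (fun j => ‖gns σ (f j) a‖)
    have hFsq : ∑ j ∈ Finset.univ.erase j0,
        (Real.exp (-(lam j) * t) * ‖trC (ρ ∘L f j)‖) ^ 2 = S := by
      rw [hS]
      refine Finset.sum_congr rfl fun j _ => ?_
      rw [mul_pow, sq, ← Real.exp_add]
      ring_nf
    -- Parseval bound
    have hpars : gns σ a a
        = ((∑ j : J, (‖gns σ (f j) a‖) ^ 2 : ℝ) : ℂ) := by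
      have h := congrArg (fun x => gns σ x a) (hcomplete a)
      rw [QMSAux.gns_sum_left] at h
      rw [h]
      push_cast
      exact Finset.sum_congr rfl fun j _ => QMSAux.conj_mul_self _
    have hG1 : ∑ j : J, (‖gns σ (f j) a‖) ^ 2 ≤ 1 := by
      have := QMSAux.gns_self_le σ hσpos hσtr a
      rw [hpars, Complex.ofReal_re, ha] at this
      simpa using this
    have hG : ∑ j ∈ Finset.univ.erase j0, (‖gns σ (f j) a‖) ^ 2 ≤ 1 := by
      refine le_trans (Finset.sum_le_sum_of_subset_of_nonneg
        (Finset.subset_univ _) (fun j _ _ => sq_nonneg _)) hG1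
    -- combine
    set T : ℝ := ∑ j ∈ Finset.univ.erase j0,
        (Real.exp (-(lam j) * t) * ‖trC (ρ ∘L f j)‖)
          * ‖gns σ (f j) a‖ with hT
    have hT0 : 0 ≤ T := Finset.sum_nonneg fun j _ =>
      mul_nonneg (mul_nonneg (Real.exp_nonneg _) (norm_nonneg _))
        (norm_nonneg _)
    have hT2 : T ^ 2 ≤ S := by
      calc T ^ 2 ≤ (∑ j ∈ Finset.univ.erase j0,
            (Real.exp (-(lam j) * t) * ‖trC (ρ ∘L f j)‖) ^ 2)
            * ∑ j ∈ Finset.univ.erase j0, (‖gns σ (f j) a‖) ^ 2 := hcs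
        _ ≤ S * 1 := by
            rw [hFsq]
            exact mul_le_mul_of_nonneg_left hG hS0
        _ = S := mul_one S
    exact habs.trans ((Real.le_sqrt hT0 hS0).mpr hT2)
  -- conclude
  have hub : ∀ x ∈ {x : ℝ | ∃ a : QA n, ‖a‖ = 1 ∧
      x = ‖trC (ρ ∘L P t a) - trC (σ ∘L a)‖}, x ≤ Real.sqrt S := by
    rintro x ⟨a, ha, rfl⟩
    exact key a ha
  have h0 : 0 ≤ sSup {x : ℝ | ∃ a : QA n, ‖a‖ = 1 ∧
      x = ‖trC (ρ ∘L P t a) - trC (σ ∘L a)‖} := by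
    refine Real.sSup_nonneg ?_
    rintro x ⟨a, ha, rfl⟩
    exact norm_nonneg _
  have hle : sSup {x : ℝ | ∃ a : QA n, ‖a‖ = 1 ∧
      x = ‖trC (ρ ∘L P t a) - trC (σ ∘L a)‖} ≤ Real.sqrt S :=
    Real.sSup_le hub (Real.sqrt_nonneg S)
  have hsq : (sSup {x : ℝ | ∃ a : QA n, ‖a‖ = 1 ∧
      x = ‖trC (ρ ∘L P t a) - trC (σ ∘L a)‖}) ^ 2 ≤ S := by
    calc _ ≤ Real.sqrt S ^ 2 := pow_le_pow_left₀ h0 hle 2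
      _ = S := Real.sq_sqrt hS0
  calc ((1/2) * sSup {x : ℝ | ∃ a : QA n, ‖a‖ = 1 ∧
        x = ‖trC (ρ ∘L P t a) - trC (σ ∘L a)‖}) ^ 2
      = (1/4) * (sSup {x : ℝ | ∃ a : QA n, ‖a‖ = 1 ∧
        x = ‖trC (ρ ∘L P t a) - trC (σ ∘L a)‖}) ^ 2 := by ring
    _ ≤ (1/4) * S := by linarith
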